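/- arXiv:1708.03969 — 2 statements merged into one kernel-verified Lean document; each statement's English description precedes it below -/
import Mathlib

section
/- Every A-module of length 3 supported at m = (x,y) with minimal number of generators equal to 2 is isomorphic either to Hom_k(A/m², k) or to (A/m) ⊕ (A/I) for some ideal I ⊂ A with A/I of length 2 supported at the origin. -/
set_option maxHeartbeats 1000000
set_option synthInstance.maxHeartbeats 400000

open MvPolynomial

noncomputable section

variable (k : Type) [Field k]

/-- `m = (x,y) ⊂ A = k[x,y]`. -/
def mIdeal : Ideal (MvPolynomial (Fin 2) k) := Ideal.span {X 0, X 1}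

/-- The ring `A/m²`. -/
abbrev Qfat := MvPolynomial (Fin 2) k ⧸ (mIdeal k ^ 2)

/-- The `A = k[x,y]`-module structure on `M* = Hom_k(A/m², k)` given by `(a·f)(b) = f(ab)`:
the underlying ring homomorphism `A →+* End_k(M*)`. -/
def dualRingHom : MvPolynomial (Fin 2) k →+* Module.End k (Module.Dual k (Qfat k)) where
  toFun a := (LinearMap.mulLeft k ((Ideal.Quotient.mk (mIdeal k ^ 2) a : Qfat k))).dualMap
  map_one' := LinearMap.ext fun f => LinearMap.ext fun q => by
    simp [LinearMap.mulLeft, LinearMap.dualMap_apply]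
  map_mul' a b := LinearMap.ext fun f => LinearMap.ext fun q => by
    simp [LinearMap.mulLeft, LinearMap.dualMap_apply, mul_assoc, mul_comm, mul_left_comm]
  map_zero' := LinearMap.ext fun f => LinearMap.ext fun q => by
    simp [LinearMap.mulLeft, LinearMap.dualMap_apply]
  map_add' a b := LinearMap.ext fun f => LinearMap.ext fun q => by
    simp only [LinearMap.dualMap_apply, LinearMap.mulLeft_apply, LinearMap.add_apply]
    rw [(Ideal.Quotient.mk (mIdeal k ^ 2)).map_add, add_mul, map_add]

/-- The `A`-module structure on `M* = Hom_k(A/m², k)`, `(a·f)(b) = f(ab)`. -/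
instance dualMod : Module (MvPolynomial (Fin 2) k) (Module.Dual k (Qfat k)) :=
  Module.compHom _ (dualRingHom k)

/-- Compatibility of the `k`- and `A`-actions on `M*` (true since
`(C c · f)(q) = f(c • q) = c • f(q)` by `k`-linearity of `f`). -/
instance dualTower : IsScalarTower k (MvPolynomial (Fin 2) k) (Module.Dual k (Qfat k)) :=
  IsScalarTower.of_algebraMap_smul (fun c f => LinearMap.ext fun q => by
    show f ((Ideal.Quotient.mk (mIdeal k ^ 2)) (algebraMap k (MvPolynomial (Fin 2) k) c) * q) = _
    rw [← Ideal.Quotient.algebraMap_eq, ← IsScalarTower.algebraMap_apply]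
    rw [← Algebra.smul_def, map_smul]
    rfl)

end

/-! Since `M/mM` has dimension 2, `mM` is a line, and nilpotency of `m` on `M` forces `m²M = 0`.
If some `v ∉ mM` is killed by `m`, then `Av ≅ A/m`, and for any `w` with `mw ≠ 0` the submodule
`Aw ≅ A/ann(w)` meets `Av` trivially and has dimension at least 2; counting dimensions,
`M = Av ⊕ Aw`, and `m² ⊆ ann(w) ⊆ m`. Otherwise the socle of `M` is the line `mM`. A functional
`f` that does not vanish on it gives the `A`-linear map `z ↦ (a ↦ f(a z))` into `Hom_k(A/m², k)`,
which is injective because every `z ≠ 0` has a multiple `a z ≠ 0` in the socle, hence bijective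
as both sides have dimension 3. -/

section ModuleTheory

variable {R M : Type*} [CommRing R] [AddCommGroup M] [Module R M]

theorem Submodule.eq_bot_of_smul_eq_self {I : Ideal R} {N : ℕ}
    (hN : I ^ N • (⊤ : Submodule R M) = ⊥) {P : Submodule R M} (hP : I • P = P) : P = ⊥ := by
  have hle : ∀ n : ℕ, P ≤ I ^ n • ⊤ := by
    intro n
    induction n with
    | zero => simp
    | succ n ih =>
      calc P = I • P := hP.symm
        _ ≤ I • I ^ n • ⊤ := smul_mono_right _ ih
        _ = I ^ (n + 1) • ⊤ := by rw [← Submodule.smul_assoc, Ideal.smul_eq_mul, ← pow_succ']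
  exact le_bot_iff.mp (hN ▸ hle N)

theorem sq_smul_top_eq_bot_of_finrank_eq_one {K : Type*} [Field K] [Module K M] [SMul K R]
    [IsScalarTower K R M] {I : Ideal R} {N : ℕ} (hN : I ^ N • (⊤ : Submodule R M) = ⊥)
    (h1 : Module.finrank K ((I • ⊤ : Submodule R M).restrictScalars K) = 1) :
    I ^ 2 • (⊤ : Submodule R M) = ⊥ := by
  set P : Submodule R M := I • ⊤
  have : Module.Finite K (P.restrictScalars K) := Module.finite_of_finrank_eq_succ h1
  rw [sq, ← Ideal.smul_eq_mul, Submodule.smul_assoc]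
  rcases (Submodule.smul_le_right : I • P ≤ P).lt_or_eq with hlt | heq
  · have hlt' := (Submodule.restrictScalars_lt K).mpr hlt
    have := Submodule.finiteDimensional_of_le hlt'.le
    have := Submodule.finrank_lt_finrank_of_lt hlt'
    rwa [h1, Nat.lt_one_iff, Submodule.finrank_eq_zero,
      Submodule.restrictScalars_eq_bot_iff] at this
  · rw [heq]
    exact Submodule.eq_bot_of_smul_eq_self hN heq

theorem le_torsionOf_of_smul_top_eq_bot {I : Ideal R} (hI : I • (⊤ : Submodule R M) = ⊥)
    (z : M) : I ≤ Ideal.torsionOf R M z := fun p hp => by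
  have := Submodule.smul_mem_smul hp (Submodule.mem_top (x := z))
  rwa [hI, Submodule.mem_bot] at this

theorem le_torsionOf_smul_of_sq_smul_top_eq_bot {I : Ideal R}
    (hI : I ^ 2 • (⊤ : Submodule R M) = ⊥) {p : R} (hp : p ∈ I) (w : M) :
    I ≤ Ideal.torsionOf R M (p • w) := fun r hr => by
  rw [Ideal.mem_torsionOf_iff, ← mul_smul]
  exact le_torsionOf_of_smul_top_eq_bot hI w (sq I ▸ Ideal.mul_mem_mul hr hp)

theorem Ideal.radical_eq_of_pow_le {I J : Ideal R} [I.IsMaximal] {n : ℕ} (hn : n ≠ 0)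
    (hIJ : I ^ n ≤ J) (hJ : J ≠ ⊤) : J.radical = I := by
  refine (Ideal.IsMaximal.eq_of_le ‹_› (mt Ideal.radical_eq_top.mp hJ) ?_).symm
  calc I = (I ^ n).radical := by rw [Ideal.radical_pow I hn, Ideal.IsMaximal.isPrime ‹_› |>.radical]
    _ ≤ J.radical := Ideal.radical_mono hIJ

theorem disjoint_span_singleton_of_isMaximal {v : M} (hv : (Ideal.torsionOf R M v).IsMaximal)
    {N : Submodule R M} (hvN : v ∉ N) : Disjoint (R ∙ v) N := by
  rw [Submodule.disjoint_def]
  intro x hx hxN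
  obtain ⟨r, rfl⟩ := Submodule.mem_span_singleton.mp hx
  by_contra hr
  obtain ⟨s, t, ht, hst⟩ := hv.exists_inv (mt (Ideal.mem_torsionOf_iff v r).mp hr)
  have hsrv : s • r • v = v := by
    rw [← mul_smul, ← add_zero ((s * r) • v), ← (Ideal.mem_torsionOf_iff v t).mp ht, ← add_smul,
      hst, one_smul]
  have := N.smul_mem s hxN
  rw [hsrv] at this
  exact hvN this

theorem exists_smul_ne_zero_mem_smul_top {I : Ideal R}
    (hsoc : ∀ z : M, I ≤ Ideal.torsionOf R M z → z ∈ I • (⊤ : Submodule R M))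
    {z : M} (hz : z ≠ 0) : ∃ p : R, p • z ≠ 0 ∧ p • z ∈ I • (⊤ : Submodule R M) := by
  by_cases hzI : z ∈ I • (⊤ : Submodule R M)
  · exact ⟨1, by rwa [one_smul], by rwa [one_smul]⟩
  · obtain ⟨p, hp, hpz⟩ := Set.not_subset.mp (mt (hsoc z) hzI)
    exact ⟨p, mt (Ideal.mem_torsionOf_iff z p).mpr hpz,
      Submodule.smul_mem_smul hp Submodule.mem_top⟩

variable {K : Type*} [Field K] [Algebra K R] [Module K M] [IsScalarTower K R M]

theorem linearIndependent_pair_smul {I : Ideal R} (hI : I ^ 2 • (⊤ : Submodule R M) = ⊥)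
    {p : R} (hp : p ∈ I) {w : M} (hpw : p • w ≠ 0) : LinearIndependent K ![w, p • w] := by
  rw [LinearIndependent.pair_iff]
  intro s t hst
  have hppw : p • p • w = 0 := le_torsionOf_smul_of_sq_smul_top_eq_bot hI hp w hp
  have hs : s • p • w = 0 := by
    simpa only [smul_add, smul_comm p, hppw, smul_zero, add_zero] using congrArg (p • ·) hst
  obtain rfl : s = 0 := (smul_eq_zero.mp hs).resolve_right hpw
  rw [zero_smul, zero_add] at hst
  exact ⟨rfl, (smul_eq_zero.mp hst).resolve_right hpw⟩

theorem two_le_finrank_span_singleton [FiniteDimensional K M] {I : Ideal R}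
    (hI : I ^ 2 • (⊤ : Submodule R M) = ⊥) {p : R} (hp : p ∈ I) {w : M} (hpw : p • w ≠ 0) :
    2 ≤ Module.finrank K ((R ∙ w).restrictScalars K) := by
  calc 2 = Module.finrank K (Submodule.span K (Set.range ![w, p • w])) := by
        rw [finrank_span_eq_card (linearIndependent_pair_smul hI hp hpw), Fintype.card_fin]
    _ ≤ _ := Submodule.finrank_mono
        (Submodule.span_le.mpr (Set.range_subset_iff.mpr fun i => ?_))
  fin_cases i
  · exact Submodule.mem_span_singleton_self w
  · exact Submodule.smul_mem _ p (Submodule.mem_span_singleton_self w)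

theorem finrank_quotient_torsionOf (w : M) :
    Module.finrank K (R ⧸ Ideal.torsionOf R M w) = Module.finrank K ((R ∙ w).restrictScalars K) :=
  ((Ideal.quotTorsionOfEquivSpanSingleton R M w).restrictScalars K).finrank_eq

end ModuleTheory

theorem exists_dual_disjoint_ker_of_finrank_eq_one {K V : Type*} [Field K] [AddCommGroup V]
    [Module K V] {W : Submodule K V} (hW : Module.finrank K W = 1) :
    ∃ f : Module.Dual K V, Disjoint (LinearMap.ker f) W := by
  obtain ⟨⟨e, he⟩, he0, hspan⟩ := finrank_eq_one_iff'.mp hW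
  obtain ⟨f, hfe⟩ : ∃ f : Module.Dual K V, f e ≠ 0 := by
    by_contra! h
    exact he0 (Subtype.ext ((Module.forall_dual_apply_eq_zero_iff K e).mp h))
  refine ⟨f, Submodule.disjoint_def.mpr fun n hfn hn => ?_⟩
  obtain ⟨c, hc⟩ := hspan ⟨n, hn⟩
  have hn : n = c • e := congrArg Subtype.val hc.symm
  rw [LinearMap.mem_ker, hn, map_smul, smul_eq_mul, mul_eq_zero] at hfn
  rw [hn, hfn.resolve_right hfe, zero_smul]

section PolynomialRing

variable {k : Type} [Field k]

theorem mIdeal_eq_idealOfVars : mIdeal k = idealOfVars (Fin 2) k := by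
  rw [mIdeal, idealOfVars]
  congr 1
  ext p
  simp [Fin.exists_fin_two, eq_comm]

theorem mem_mIdeal_iff {p : MvPolynomial (Fin 2) k} : p ∈ mIdeal k ↔ constantCoeff p = 0 := by
  rw [mIdeal_eq_idealOfVars, ← pow_one (idealOfVars (Fin 2) k), mem_pow_idealOfVars_iff']
  simp [Finsupp.degree_eq_zero_iff, constantCoeff]

theorem mIdeal_eq_ker_constantCoeff :
    mIdeal k = RingHom.ker (constantCoeff : MvPolynomial (Fin 2) k →+* k) :=
  Ideal.ext fun _ => mem_mIdeal_iff

instance mIdeal_isMaximal : (mIdeal k).IsMaximal := by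
  rw [mIdeal_eq_ker_constantCoeff]
  exact RingHom.ker_isMaximal_of_surjective _ fun c => ⟨C c, constantCoeff_C _ c⟩

theorem sub_C_constantCoeff_mem_mIdeal (p : MvPolynomial (Fin 2) k) :
    p - C (constantCoeff p) ∈ mIdeal k := by
  simp [mem_mIdeal_iff]

theorem smul_mk_eq_mk_C_mul (I : Ideal (MvPolynomial (Fin 2) k)) (c : k)
    (p : MvPolynomial (Fin 2) k) :
    c • Ideal.Quotient.mk I p = Ideal.Quotient.mk I (C c * p) := by
  rw [← smul_eq_C_mul]
  rfl

theorem mk_mul_X_eq_constantCoeff_smul (q : MvPolynomial (Fin 2) k) (i : Fin 2) :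
    Ideal.Quotient.mk (mIdeal k ^ 2) (q * X i) =
      constantCoeff q • Ideal.Quotient.mk (mIdeal k ^ 2) (X i) := by
  rw [smul_mk_eq_mk_C_mul, Ideal.Quotient.eq, ← sub_mul, sq]
  exact Ideal.mul_mem_mul (sub_C_constantCoeff_mem_mIdeal q)
    (Ideal.subset_span (by fin_cases i <;> simp))

theorem span_one_X_eq_top :
    Submodule.span k (Set.range ![Ideal.Quotient.mk (mIdeal k ^ 2) 1,
      Ideal.Quotient.mk (mIdeal k ^ 2) (X 0), Ideal.Quotient.mk (mIdeal k ^ 2) (X 1)]) = ⊤ := by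
  rw [eq_top_iff]
  rintro q -
  obtain ⟨p, rfl⟩ := Ideal.Quotient.mk_surjective q
  obtain ⟨a, b, hab⟩ := Ideal.mem_span_pair.mp (sub_C_constantCoeff_mem_mIdeal p)
  have hp : p = C (constantCoeff p) * 1 + a * X 0 + b * X 1 := by
    linear_combination -hab
  rw [hp, map_add, map_add, ← smul_mk_eq_mk_C_mul, mk_mul_X_eq_constantCoeff_smul,
    mk_mul_X_eq_constantCoeff_smul]
  refine add_mem (add_mem ?_ ?_) ?_ <;>
    exact Submodule.smul_mem _ _ (Submodule.subset_span (by simp))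

instance : Module.Finite k (Qfat k) :=
  Module.finite_def.mpr (Submodule.fg_def.mpr ⟨_, Set.finite_range _, span_one_X_eq_top⟩)

theorem finrank_Qfat_le : Module.finrank k (Qfat k) ≤ 3 := by
  rw [← finrank_top, ← span_one_X_eq_top]
  exact (finrank_range_le_card _).trans_eq (Fintype.card_fin 3)

end PolynomialRing

section Classification

variable {k : Type} [Field k] {M : Type} [AddCommGroup M] [Module (MvPolynomial (Fin 2) k) M]
  [Module k M] [IsScalarTower k (MvPolynomial (Fin 2) k) M]

theorem smul_eq_constantCoeff_smul {z : M}
    (hz : mIdeal k ≤ Ideal.torsionOf (MvPolynomial (Fin 2) k) M z) (q : MvPolynomial (Fin 2) k) :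
    q • z = constantCoeff q • z := by
  rw [← algebraMap_smul (MvPolynomial (Fin 2) k) (constantCoeff q) z, algebraMap_eq,
    ← sub_eq_zero, ← sub_smul]
  exact hz (sub_C_constantCoeff_mem_mIdeal q)

theorem notMem_span_singleton_of_smul_ne_zero
    (hm2 : mIdeal k ^ 2 • (⊤ : Submodule (MvPolynomial (Fin 2) k) M) = ⊥)
    {p : MvPolynomial (Fin 2) k} (hp : p ∈ mIdeal k) {w : M} (hpw : p • w ≠ 0) {v : M}
    (hvm : mIdeal k ≤ Ideal.torsionOf (MvPolynomial (Fin 2) k) M v)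
    (hv : v ∉ mIdeal k • (⊤ : Submodule (MvPolynomial (Fin 2) k) M)) :
    v ∉ (MvPolynomial (Fin 2) k) ∙ w := by
  intro hvw
  obtain ⟨q, rfl⟩ := Submodule.mem_span_singleton.mp hvw
  have hq : constantCoeff q • p • w = 0 := by
    rw [← smul_eq_constantCoeff_smul (le_torsionOf_smul_of_sq_smul_top_eq_bot hm2 hp w),
      smul_comm]
    exact hvm hp
  have hqm : q ∈ mIdeal k := mem_mIdeal_iff.mpr ((smul_eq_zero.mp hq).resolve_right hpw)
  exact hv (Submodule.smul_mem_smul hqm Submodule.mem_top)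

theorem exists_linearEquiv_quotient_mIdeal_prod (hlen : Module.finrank k M = 3)
    (hm2 : mIdeal k ^ 2 • (⊤ : Submodule (MvPolynomial (Fin 2) k) M) = ⊥)
    (hP : mIdeal k • (⊤ : Submodule (MvPolynomial (Fin 2) k) M) ≠ ⊥) {v : M}
    (hvm : mIdeal k ≤ Ideal.torsionOf (MvPolynomial (Fin 2) k) M v)
    (hv : v ∉ mIdeal k • (⊤ : Submodule (MvPolynomial (Fin 2) k) M)) :
    ∃ I : Ideal (MvPolynomial (Fin 2) k),
      Module.finrank k (MvPolynomial (Fin 2) k ⧸ I) = 2 ∧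
      I.radical = mIdeal k ∧
      Nonempty (M ≃ₗ[MvPolynomial (Fin 2) k]
        ((MvPolynomial (Fin 2) k ⧸ mIdeal k) × (MvPolynomial (Fin 2) k ⧸ I))) := by
  have : FiniteDimensional k M := Module.finite_of_finrank_eq_succ hlen
  have hv0 : v ≠ 0 := fun h => hv (h ▸ zero_mem _)
  have htv : mIdeal k = Ideal.torsionOf (MvPolynomial (Fin 2) k) M v :=
    mIdeal_isMaximal.eq_of_le (mt (Ideal.torsionOf_eq_top_iff _ v).mp hv0) hvm
  obtain ⟨p, hp, w, hpw⟩ : ∃ p ∈ mIdeal k, ∃ w : M, p • w ≠ 0 := by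
    by_contra! h
    exact hP (eq_bot_iff.mpr (Submodule.smul_le.mpr fun p hp w _ => (h p hp w).symm ▸ zero_mem _))
  have hw0 : w ≠ 0 := fun h => hpw (by rw [h, smul_zero])
  have hdisj : Disjoint (MvPolynomial (Fin 2) k ∙ v) (MvPolynomial (Fin 2) k ∙ w) :=
    disjoint_span_singleton_of_isMaximal (htv ▸ mIdeal_isMaximal)
      (notMem_span_singleton_of_smul_ne_zero hm2 hp hpw hvm hv)
  have hv1 : 1 ≤ Module.finrank k ((MvPolynomial (Fin 2) k ∙ v).restrictScalars k) := by
    rw [Nat.one_le_iff_ne_zero, Ne, Submodule.finrank_eq_zero,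
      Submodule.restrictScalars_eq_bot_iff, Submodule.span_singleton_eq_bot]
    exact hv0
  have hw2 := two_le_finrank_span_singleton (K := k) hm2 hp hpw
  have hsum := Submodule.finrank_add_finrank_le_of_disjoint
    ((Submodule.disjoint_restrictScalars_iff k).mpr hdisj)
  have hcompl : IsCompl (MvPolynomial (Fin 2) k ∙ v) (MvPolynomial (Fin 2) k ∙ w) :=
    (Submodule.isCompl_restrictScalars_iff k).mp
      ((Submodule.isCompl_iff_disjoint _ _ (by omega)).mpr
        ((Submodule.disjoint_restrictScalars_iff k).mpr hdisj))
  refine ⟨Ideal.torsionOf _ M w, ?_, Ideal.radical_eq_of_pow_le two_ne_zero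
    (le_torsionOf_of_smul_top_eq_bot hm2 w) (mt (Ideal.torsionOf_eq_top_iff _ w).mp hw0), ⟨?_⟩⟩
  · rw [finrank_quotient_torsionOf]
    omega
  · exact (Submodule.prodEquivOfIsCompl _ _ hcompl).symm ≪≫ₗ LinearEquiv.prodCongr
      ((Ideal.quotTorsionOfEquivSpanSingleton _ M v).symm ≪≫ₗ Submodule.quotEquivOfEq _ _ htv.symm)
      (Ideal.quotTorsionOfEquivSpanSingleton _ M w).symm

variable (hm2 : mIdeal k ^ 2 • (⊤ : Submodule (MvPolynomial (Fin 2) k) M) = ⊥)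
  (f : Module.Dual k M)

noncomputable def dualPairing : M →ₗ[MvPolynomial (Fin 2) k] Module.Dual k (Qfat k) where
  toFun z := f ∘ₗ ((mIdeal k ^ 2).liftQ (LinearMap.toSpanSingleton _ M z)
    (le_torsionOf_of_smul_top_eq_bot hm2 z)).restrictScalars k
  map_add' z₁ z₂ := LinearMap.ext fun q => by
    obtain ⟨p, rfl⟩ := Ideal.Quotient.mk_surjective q
    show f (p • (z₁ + z₂)) = f (p • z₁) + f (p • z₂)
    rw [smul_add, map_add]
  map_smul' r z := LinearMap.ext fun q => by
    obtain ⟨p, rfl⟩ := Ideal.Quotient.mk_surjective q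
    show f (p • r • z) = f ((r * p) • z)
    rw [mul_comm, mul_smul]

theorem dualPairing_mk (z : M) (p : MvPolynomial (Fin 2) k) :
    dualPairing hm2 f z (Ideal.Quotient.mk _ p) = f (p • z) :=
  rfl

theorem dualPairing_injective
    (hsoc : ∀ z : M, mIdeal k ≤ Ideal.torsionOf (MvPolynomial (Fin 2) k) M z →
      z ∈ mIdeal k • (⊤ : Submodule (MvPolynomial (Fin 2) k) M))
    (hf : Disjoint (LinearMap.ker f)
      ((mIdeal k • (⊤ : Submodule (MvPolynomial (Fin 2) k) M)).restrictScalars k)) :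
    Function.Injective (dualPairing hm2 f) := by
  rw [← LinearMap.ker_eq_bot, Submodule.eq_bot_iff]
  intro z hz
  by_contra hz0
  obtain ⟨p, hpz, hpP⟩ := exists_smul_ne_zero_mem_smul_top hsoc hz0
  refine hpz (Submodule.disjoint_def.mp hf _ ?_ hpP)
  rw [LinearMap.mem_ker, ← dualPairing_mk hm2, LinearMap.mem_ker.mp hz]
  rfl

theorem dualPairing_bijective (hlen : Module.finrank k M = 3)
    (hsoc : ∀ z : M, mIdeal k ≤ Ideal.torsionOf (MvPolynomial (Fin 2) k) M z →
      z ∈ mIdeal k • (⊤ : Submodule (MvPolynomial (Fin 2) k) M))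
    (hf : Disjoint (LinearMap.ker f)
      ((mIdeal k • (⊤ : Submodule (MvPolynomial (Fin 2) k) M)).restrictScalars k)) :
    Function.Bijective (dualPairing hm2 f) := by
  have : FiniteDimensional k M := Module.finite_of_finrank_eq_succ hlen
  have hinj : Function.Injective ((dualPairing hm2 f).restrictScalars k) :=
    dualPairing_injective hm2 f hsoc hf
  have hdim : Module.finrank k M = Module.finrank k (Module.Dual k (Qfat k)) := by
    have := LinearMap.finrank_le_finrank_of_injective hinj
    have := (Subspace.dual_finrank_eq (K := k) (V := Qfat k)).trans_le finrank_Qfat_le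
    omega
  exact ⟨hinj, (LinearMap.injective_iff_surjective_of_finrank_eq_finrank hdim).mp hinj⟩

end Classification

theorem length_three_two_generators_classification_general
    (k : Type) [Field k]
    (M : Type) [AddCommGroup M]
    [Module (MvPolynomial (Fin 2) k) M] [Module k M]
    [IsScalarTower k (MvPolynomial (Fin 2) k) M]
    -- `M` has length `3`
    (hlen : Module.finrank k M = 3)
    -- `M` is supported entirely at the origin
    (hsupp : ∃ N : ℕ, (mIdeal k ^ N) • (⊤ : Submodule (MvPolynomial (Fin 2) k) M) = ⊥)
    -- the minimal number of generators of `M` is `2`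
    (hgen : Module.finrank k (M ⧸ (Submodule.restrictScalars k
        ((mIdeal k) • (⊤ : Submodule (MvPolynomial (Fin 2) k) M)))) = 2) :
    Nonempty (M ≃ₗ[MvPolynomial (Fin 2) k] Module.Dual k (Qfat k)) ∨
    ∃ I : Ideal (MvPolynomial (Fin 2) k),
      Module.finrank k (MvPolynomial (Fin 2) k ⧸ I) = 2 ∧
      I.radical = mIdeal k ∧
      Nonempty (M ≃ₗ[MvPolynomial (Fin 2) k]
        ((MvPolynomial (Fin 2) k ⧸ mIdeal k) × (MvPolynomial (Fin 2) k ⧸ I))) := by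
  have : FiniteDimensional k M := Module.finite_of_finrank_eq_succ hlen
  set P : Submodule (MvPolynomial (Fin 2) k) M := mIdeal k • ⊤
  have hP1 : Module.finrank k (P.restrictScalars k) = 1 := by
    have := Submodule.finrank_quotient_add_finrank (P.restrictScalars k)
    omega
  obtain ⟨N, hN⟩ := hsupp
  have hm2 := sq_smul_top_eq_bot_of_finrank_eq_one hN hP1
  by_cases hsoc : ∀ z : M, mIdeal k ≤ Ideal.torsionOf _ M z → z ∈ P
  · obtain ⟨f, hf⟩ := exists_dual_disjoint_ker_of_finrank_eq_one hP1
    exact Or.inl ⟨.ofBijective _ (dualPairing_bijective hm2 f hlen hsoc hf)⟩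
  · push Not at hsoc
    obtain ⟨v, hvm, hv⟩ := hsoc
    have hP : P ≠ ⊥ := fun h => by
      rw [h, Submodule.restrictScalars_bot, finrank_bot] at hP1
      exact zero_ne_one hP1
    exact Or.inr (exists_linearEquiv_quotient_mIdeal_prod hlen hm2 hP hvm hv)

/-- Every `A = k[x,y]`-module of length `3` supported at `m = (x,y)` with
minimal number of generators `2` is isomorphic either to `Hom_k(A/m², k)` (with action
`(a·f)(b) = f(ab)`) or to `(A/m) ⊕ (A/I)` for some ideal `I` with `A/I` of length `2`
supported at the origin. -/
theorem length_three_two_generators_classification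
    (k : Type) [Field k] [IsAlgClosed k] [CharZero k]
    (M : Type) [AddCommGroup M]
    [Module (MvPolynomial (Fin 2) k) M] [Module k M]
    [IsScalarTower k (MvPolynomial (Fin 2) k) M]
    -- `M` has length `3`
    (hlen : Module.finrank k M = 3)
    -- `M` is supported entirely at the origin
    (hsupp : ∃ N : ℕ, (mIdeal k ^ N) • (⊤ : Submodule (MvPolynomial (Fin 2) k) M) = ⊥)
    -- the minimal number of generators of `M` is `2`
    (hgen : Module.finrank k (M ⧸ (Submodule.restrictScalars k
        ((mIdeal k) • (⊤ : Submodule (MvPolynomial (Fin 2) k) M)))) = 2) :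
    Nonempty (M ≃ₗ[MvPolynomial (Fin 2) k] Module.Dual k (Qfat k)) ∨
    ∃ I : Ideal (MvPolynomial (Fin 2) k),
      Module.finrank k (MvPolynomial (Fin 2) k ⧸ I) = 2 ∧
      I.radical = mIdeal k ∧
      Nonempty (M ≃ₗ[MvPolynomial (Fin 2) k]
        ((MvPolynomial (Fin 2) k ⧸ mIdeal k) × (MvPolynomial (Fin 2) k ⧸ I))) :=
  length_three_two_generators_classification_general k M hlen hsupp hgen
end

section
/- For the module M = A/m² over A = k[x,y], the automorphism group Aut_A(M) is isomorphic to 𝔾_a² ⋊ 𝔾_m; in particular it has dimension 3 and its class in the Grothendieck ring of varieties is L²(L−1). -/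
/-!
An `A`-linear automorphism of the cyclic module `A/I` is multiplication by a unit of `A/I`.
Here `A/m² ≅ k[ε₁, ε₂]` is the trivial square-zero extension `k ⊕ k²`, whose units `a + v`
factor as `a · (1 + a⁻¹ v)`. Since `(a + v)(b + w) = ab + (aw + bv)`, the map
`a + v ↦ (a⁻¹ v, a)` is an isomorphism onto `k² × kˣ`: the group is commutative and the
semidirect product is the direct one, `φ = 1`.
-/

open MvPolynomial TrivSqZeroExt

noncomputable section

namespace LinearEquiv

def selfMulEquivUnits (S : Type*) [CommRing S] : (S ≃ₗ[S] S) ≃* Sˣ :=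
  (LinearMap.GeneralLinearGroup.generalLinearEquiv S S).symm.trans <|
    (Units.mapEquiv (RingEquiv.moduleEndSelf S).symm.toMulEquiv).trans
      (Units.mapEquiv (RingEquiv.toOpposite S).symm.toMulEquiv)

def mulEquivUnitsOfSurjective {A S : Type*} [CommRing A] [CommRing S] [Algebra A S]
    (h : Function.Surjective (algebraMap A S)) : (S ≃ₗ[A] S) ≃* Sˣ :=
  MulEquiv.trans
    { toFun f := f.extendScalarsOfSurjective h
      invFun f := f.restrictScalars A
      left_inv _ := rfl
      right_inv _ := rfl
      map_mul' _ _ := rfl }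
    (selfMulEquivUnits S)

end LinearEquiv

namespace TrivSqZeroExt

variable {R M : Type*} [CommRing R] [AddCommGroup M] [Module R M] [Module Rᵐᵒᵖ M]
  [IsCentralScalar R M]

def fstUnits : (TrivSqZeroExt R M)ˣ →* Rˣ := Units.map (fstHom R R M).toMonoidHom

@[simp]
lemma val_fstUnits (u : (TrivSqZeroExt R M)ˣ) : (fstUnits u : R) = (u : TrivSqZeroExt R M).fst :=
  rfl

@[simp]
lemma fst_mul_fst_inv (u : (TrivSqZeroExt R M)ˣ) :
    (u : TrivSqZeroExt R M).fst * (↑u⁻¹ : TrivSqZeroExt R M).fst = 1 := by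
  rw [← fst_mul, Units.mul_inv, fst_one]

@[simp]
lemma fst_inv_mul_fst (u : (TrivSqZeroExt R M)ˣ) :
    (↑u⁻¹ : TrivSqZeroExt R M).fst * (u : TrivSqZeroExt R M).fst = 1 := by
  rw [← fst_mul, Units.inv_mul, fst_one]

def unitsMulEquivProd : (TrivSqZeroExt R M)ˣ ≃* Multiplicative M × Rˣ where
  toFun u := (.ofAdd ((↑u⁻¹ : TrivSqZeroExt R M).fst • (u : TrivSqZeroExt R M).snd), fstUnits u)
  invFun p :=
    { val := inl (p.2 : R) + inr ((p.2 : R) • p.1.toAdd)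
      inv := inl (↑p.2⁻¹ : R) - inr ((↑p.2⁻¹ : R) • p.1.toAdd)
      val_inv := by ext <;> simp [smul_smul]
      inv_val := by ext <;> simp [smul_smul] }
  left_inv u := by ext <;> simp [smul_smul]
  right_inv p := by ext <;> simp [smul_smul]
  map_mul' u v := by
    ext
    · simp only [mul_inv_rev, Units.val_mul, fst_mul, snd_mul, op_smul_eq_smul, smul_add,
        smul_smul, ofAdd_add, toAdd_mul, toAdd_ofAdd, Prod.mk_mul_mk]
      rw [mul_assoc, fst_inv_mul_fst, mul_one, mul_right_comm, fst_inv_mul_fst, one_mul, add_comm]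
    · simp

end TrivSqZeroExt

namespace MvPolynomial

variable (σ R : Type*) [CommRing R]

local notation "Q" => MvPolynomial σ R ⧸ idealOfVars σ R ^ 2

def toTrivSqZeroExt : MvPolynomial σ R →ₐ[R] TrivSqZeroExt R (σ →₀ R) :=
  aeval fun i ↦ inr (Finsupp.single i 1)

variable {σ R}

lemma fst_toTrivSqZeroExt_of_mem {p : MvPolynomial σ R} (hp : p ∈ idealOfVars σ R) :
    (toTrivSqZeroExt σ R p).fst = 0 := by
  have : idealOfVars σ R ≤ RingHom.ker ((fstHom R R (σ →₀ R)).comp (toTrivSqZeroExt σ R)) := by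
    rw [Ideal.span_le, Set.range_subset_iff]
    intro i
    simp [toTrivSqZeroExt]
  exact this hp

lemma toTrivSqZeroExt_eq_zero_of_mem_sq {p : MvPolynomial σ R} (hp : p ∈ idealOfVars σ R ^ 2) :
    toTrivSqZeroExt σ R p = 0 := by
  rw [pow_two] at hp
  refine Submodule.mul_induction_on hp (fun a ha b hb ↦ ?_)
    (fun _ _ ha hb ↦ by rw [map_add, ha, hb, add_zero])
  ext
  · simp [fst_toTrivSqZeroExt_of_mem ha]
  · simp [fst_toTrivSqZeroExt_of_mem ha, fst_toTrivSqZeroExt_of_mem hb]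

variable (σ R) in
def quotSqToTrivSqZeroExt : Q →ₐ[R] TrivSqZeroExt R (σ →₀ R) :=
  Ideal.Quotient.liftₐ _ (toTrivSqZeroExt σ R) fun _ ↦ toTrivSqZeroExt_eq_zero_of_mem_sq

@[simp]
lemma quotSqToTrivSqZeroExt_mk (p : MvPolynomial σ R) :
    quotSqToTrivSqZeroExt σ R (Ideal.Quotient.mk _ p) = toTrivSqZeroExt σ R p :=
  rfl

lemma linearCombination_X_mem_idealOfVars (m : σ →₀ R) :
    Finsupp.linearCombination R X m ∈ idealOfVars σ R :=
  Submodule.span_le_restrictScalars R (MvPolynomial σ R) (Set.range X)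
    (by rw [← Finsupp.range_linearCombination]; exact LinearMap.mem_range_self _ m)

variable (σ R) in
def trivSqZeroExtToQuotSq : TrivSqZeroExt R (σ →₀ R) →ₐ[R] Q :=
  liftEquivOfComm
    ⟨(Ideal.Quotient.mkₐ R _).toLinearMap ∘ₗ Finsupp.linearCombination R X, fun x y ↦ by
      simp only [LinearMap.comp_apply, AlgHom.toLinearMap_apply, ← map_mul,
        Ideal.Quotient.mkₐ_eq_mk, Ideal.Quotient.eq_zero_iff_mem, pow_two]
      exact Ideal.mul_mem_mul (linearCombination_X_mem_idealOfVars x)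
        (linearCombination_X_mem_idealOfVars y)⟩

@[simp]
lemma trivSqZeroExtToQuotSq_inr (m : σ →₀ R) :
    trivSqZeroExtToQuotSq σ R (inr m) = Ideal.Quotient.mk _ (Finsupp.linearCombination R X m) := by
  simp [trivSqZeroExtToQuotSq]

variable (σ R) in
def quotSqIdealOfVarsEquiv : Q ≃ₐ[R] TrivSqZeroExt R (σ →₀ R) :=
  AlgEquiv.ofAlgHom (quotSqToTrivSqZeroExt σ R) (trivSqZeroExtToQuotSq σ R)
    (TrivSqZeroExt.algHom_ext fun m ↦ by
      induction m using Finsupp.induction_linear with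
      | zero => simp
      | add m n hm hn => simp_all
      | single i r => simp [toTrivSqZeroExt, ← inr_smul])
    (Ideal.Quotient.algHom_ext _ (MvPolynomial.algHom_ext fun i ↦ by simp [toTrivSqZeroExt]))

end MvPolynomial

end

lemma Set.range_fin_two {α : Type*} (f : Fin 2 → α) : Set.range f = {f 0, f 1} := by
  ext
  simp [Fin.exists_fin_two, eq_comm]

theorem aut_fat_point_semidirect_general
    (k : Type) [Field k] :
    ∃ φ : kˣ →* MulAut (Multiplicative (k × k)),
      Nonempty
        (((MvPolynomial (Fin 2) k ⧸ ((Ideal.span {X 0, X 1} : Ideal (MvPolynomial (Fin 2) k)) ^ 2))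
            ≃ₗ[MvPolynomial (Fin 2) k]
          (MvPolynomial (Fin 2) k ⧸ ((Ideal.span {X 0, X 1} : Ideal (MvPolynomial (Fin 2) k)) ^ 2)))
          ≃* (Multiplicative (k × k) ⋊[φ] kˣ)) := by
  have hm : (Ideal.span {X 0, X 1} : Ideal (MvPolynomial (Fin 2) k)) = idealOfVars (Fin 2) k := by
    rw [idealOfVars, Set.range_fin_two]
  rw [hm]
  let e : (Fin 2 →₀ k) ≃+ k × k :=
    ((Finsupp.linearEquivFunOnFinite k k (Fin 2)).trans (LinearEquiv.finTwoArrow k k)).toAddEquiv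
  exact ⟨1, ⟨(LinearEquiv.mulEquivUnitsOfSurjective Ideal.Quotient.mk_surjective).trans <|
    (Units.mapEquiv (quotSqIdealOfVarsEquiv (Fin 2) k).toMulEquiv).trans <|
      TrivSqZeroExt.unitsMulEquivProd.trans <|
        (MulEquiv.prodCongr e.toMultiplicative (MulEquiv.refl _)).trans
          SemidirectProduct.mulEquivProd.symm⟩⟩

/-- For `M = A/m²` over `A = k[x,y]`, the automorphism group `Aut_A(M)`
is isomorphic to `𝔾_a² ⋊ 𝔾_m`, i.e. to a semidirect product of the additive group
`k × k` by the multiplicative group `kˣ`; in particular it has dimension `3`. -/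
theorem aut_fat_point_semidirect
    (k : Type) [Field k] [IsAlgClosed k] [CharZero k] :
    ∃ φ : kˣ →* MulAut (Multiplicative (k × k)),
      Nonempty
        (((MvPolynomial (Fin 2) k ⧸ ((Ideal.span {X 0, X 1} : Ideal (MvPolynomial (Fin 2) k)) ^ 2))
            ≃ₗ[MvPolynomial (Fin 2) k]
          (MvPolynomial (Fin 2) k ⧸ ((Ideal.span {X 0, X 1} : Ideal (MvPolynomial (Fin 2) k)) ^ 2)))
          ≃* (Multiplicative (k × k) ⋊[φ] kˣ)) :=
  aut_fat_point_semidirect_general k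
end
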